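/- Let n1, n2 ≥ 1 and r ≥ 1. For the complete bipartite graph K_{n1,n2}, the graded Betti numbers of R/I_r(K_{n1,n2}) satisfy β_{i,i+r}(R/I_r(K_{n1,n2})) = C(n1+n2, i+r) · C(i+r−1, r) − ∑_{(j1,j2) ∈ ℕ², j1+j2 = i+r} C(n1, j1) C(n2, j2) [C(j1−1, r) + C(j2−1, r)], and β_{i,i+d}(R/I_r(K_{n1,n2})) = 0 for d ≠ r with (i,d) ≠ (0,0). -/

import Mathlib

/-!
By Hochster's formula, `β_{i,j}` is a sum over the `j`-subsets `W` of the vertices of the reduced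
homology of the induced complex `Δ[W]` in cardinality degree `j - i`. For nonempty `W`, the faces of
`Δ[W]` are all subsets of `W` with at most `r` elements, together with all subsets of `L = W ∩ V₁`
and of `R = W ∩ V₂`. The rank of `∂ : C_{k+1} → C_k` only depends on the `(k+1)`-faces, so it is
that of the full simplex on `W` for `k < r`, and the sum of the ranks for the simplices on `L` and
`R` for `k ≥ r` (their `k`-chains have disjoint supports once `k ≥ 1`). A simplex on `S` is acyclic
(cone off its least vertex), so its boundary ranks are `C(|S| - 1, k)`. Pascal's rule then leaves
homology only in degree `r`, of dimension `C(|W| - 1, r) - C(|L| - 1, r) - C(|R| - 1, r)`, and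
sorting the `W` by `(|L|, |R|)` together with Vandermonde's identity gives the formula.
-/
open Finset

/-- An (abstract) simplicial complex on vertex type `V`: a downward-closed collection of
finite subsets of `V`. -/
structure SC (V : Type*) where
  faces : Set (Finset V)
  down : ∀ ⦃F G : Finset V⦄, F ∈ faces → G ⊆ F → G ∈ faces

variable {V : Type*} [LinearOrder V] (K : Type*) [Field K]

/-- The faces of `Δ` of cardinality `k` (the `(k-1)`-dimensional faces). -/
def SC.face (Δ : SC V) (k : ℕ) : Type _ := {F : Finset V // F ∈ Δ.faces ∧ F.card = k}

/-- The `k`-th term of the reduced simplicial chain complex of `Δ` over `K`: the free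
`K`-vector space on the faces of cardinality `k` (so degree `k` corresponds to simplicial
dimension `k - 1`; degree `0` is spanned by the empty face). -/
abbrev SC.chain (Δ : SC V) (k : ℕ) : Type _ := Δ.face k →₀ K

/-- The simplicial boundary map `C_{k+1} → C_k`, with the usual alternating signs
determined by the linear order on the vertices. -/
noncomputable def SC.bdry (Δ : SC V) (k : ℕ) : Δ.chain K (k + 1) →ₗ[K] Δ.chain K k :=
  Finsupp.lsum K fun F => LinearMap.toSpanSingleton K _
    (∑ x ∈ F.1.attach,
      ((-1 : K) ^ ((F.1.filter (fun y => y < x.1)).card)) •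
        Finsupp.single
          (⟨F.1.erase x.1, Δ.down F.2.1 (Finset.erase_subset _ _), by
              simp [Finset.card_erase_of_mem x.2, F.2.2]⟩ : Δ.face k)
          (1 : K))

/-- The boundary map out of degree `k` (the zero map in degree `0`). -/
noncomputable def SC.bdryTo (Δ : SC V) : (k : ℕ) → (Δ.chain K k →ₗ[K] Δ.chain K (k - 1))
  | 0 => 0
  | (k + 1) => Δ.bdry K k

/-- The dimension over `K` of the degree-`k` reduced simplicial homology of `Δ`
(i.e. the reduced homology in simplicial dimension `k - 1`): since the image of the
boundary is contained in its kernel, this is `dim ker ∂_k − dim im ∂_{k+1}`. -/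
noncomputable def SC.hdim (Δ : SC V) (k : ℕ) : ℕ :=
  Module.finrank K (LinearMap.ker (Δ.bdryTo K k)) -
    Module.finrank K (LinearMap.range (Δ.bdry K k))

/-- The induced subcomplex `Δ[W]` of `Δ` on a subset `W` of the vertices. -/
def SC.induce (Δ : SC V) (W : Finset V) : SC V :=
  ⟨{F | F ∈ Δ.faces ∧ F ⊆ W}, fun F G hF hGF => ⟨Δ.down hF.1 hGF, hGF.trans hF.2⟩⟩

/-- The graded Betti numbers `β_{i,j}` of the Stanley–Reisner ring of `Δ` over `K`,
via Hochster's formula: `β_{i,j} = ∑_{W ⊆ V, |W| = j} dim_K H̃_{j-i-1}(Δ[W]; K)`. -/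
noncomputable def SC.betti [Fintype V] (Δ : SC V) (i j : ℕ) : ℕ :=
  ∑ W ∈ Finset.univ.powersetCard j, (Δ.induce W).hdim K (j - i)

/-- The Castelnuovo–Mumford regularity of the Stanley–Reisner ring of `Δ` over `K`:
`reg = max { d : β_{i,i+d} ≠ 0 for some i }`. -/
noncomputable def SC.reg [Fintype V] (Δ : SC V) : ℕ :=
  sSup {d : ℕ | ∃ i : ℕ, Δ.betti K i (i + d) ≠ 0}

/-- A linear order on the vertex set `Fin n1 ⊕ Fin n2` of the complete bipartite graph. -/
noncomputable instance sumLinearOrder (n1 n2 : ℕ) : LinearOrder (Fin n1 ⊕ Fin n2) :=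
  LinearOrder.lift' (finSumFinEquiv : Fin n1 ⊕ Fin n2 ≃ Fin (n1 + n2))
    finSumFinEquiv.injective

/-- The Stanley–Reisner complex of the hyperedge ideal `I_r(K_{n1,n2})` of the complete
bipartite graph: the `r`-independent sets, i.e. the subsets `F` of the vertices with
`|F| ≤ r`, or `F` contained in one side of the bipartition. -/
def bipSC (n1 n2 r : ℕ) : SC (Fin n1 ⊕ Fin n2) :=
  ⟨{F | F.card ≤ r ∨ (∀ x ∈ F, x.isLeft) ∨ (∀ x ∈ F, x.isRight)}, by
    rintro F G hF hGF
    rcases hF with h | h | h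
    · exact Or.inl ((Finset.card_le_card hGF).trans h)
    · exact Or.inr (Or.inl fun x hx => h x (hGF hx))
    · exact Or.inr (Or.inr fun x hx => h x (hGF hx))⟩

open Module

lemma Nat.choose_succ_eq_sub_one_choose_add {n k : ℕ} (h : n ≠ 0 ∨ k ≠ 0) :
    n.choose (k + 1) = (n - 1).choose k + (n - 1).choose (k + 1) := by
  rcases n with _ | n
  · simp [Nat.choose_eq_zero_of_lt, Nat.pos_of_ne_zero (h.resolve_left (by simp))]
  · exact Nat.choose_succ_succ' n k

lemma Nat.choose_add_choose_le_choose_add (m n s : ℕ) :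
    m.choose (s + 1) + n.choose (s + 1) ≤ (m + n).choose (s + 1) := by
  induction n with
  | zero => simp
  | succ n ih =>
    rw [← add_assoc, Nat.choose_succ_succ', Nat.choose_succ_succ']
    have := Nat.choose_le_choose s (Nat.le_add_left n m)
    omega

lemma Nat.choose_sub_one_add_choose_sub_one_le {r : ℕ} (hr : r ≠ 0) (a b : ℕ) :
    (a - 1).choose r + (b - 1).choose r ≤ (a + b - 1).choose r := by
  obtain ⟨s, rfl⟩ := Nat.exists_eq_succ_of_ne_zero hr
  exact (Nat.choose_add_choose_le_choose_add _ _ s).trans (Nat.choose_le_choose _ (by omega))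

lemma Finset.sum_powersetCard_univ_sum_eq_sum_antidiagonal {α β M : Type*} [Fintype α] [Fintype β]
    [AddCommMonoid M] (j : ℕ) (f : ℕ → ℕ → M) :
    ∑ W ∈ (univ : Finset (α ⊕ β)).powersetCard j, f W.toLeft.card W.toRight.card =
      ∑ p ∈ antidiagonal j,
        ((Fintype.card α).choose p.1 * (Fintype.card β).choose p.2) • f p.1 p.2 := by
  calc _ = ∑ AB ∈ (univ : Finset (Finset α × Finset β)).filter
          (fun AB => AB.1.card + AB.2.card = j), f AB.1.card AB.2.card := by
        refine sum_nbij' (fun W => (W.toLeft, W.toRight)) (fun AB => AB.1.disjSum AB.2)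
          ?_ ?_ ?_ ?_ ?_ <;> simp [card_toLeft_add_card_toRight, toLeft_disjSum_toRight]
    _ = ∑ p ∈ antidiagonal j,
        ∑ AB ∈ (univ : Finset α).powersetCard p.1 ×ˢ (univ : Finset β).powersetCard p.2,
        f p.1 p.2 := by
        rw [← sum_fiberwise_of_maps_to (g := fun AB => (AB.1.card, AB.2.card))
          (t := antidiagonal j) (by simp)]
        refine sum_congr rfl fun p hp => sum_congr ?_ fun AB hAB => ?_
        · ext AB
          simp only [mem_filter, mem_univ, true_and, mem_product, mem_powersetCard_univ]
          grind [HasAntidiagonal.mem_antidiagonal]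
        · simp only [mem_product, mem_powersetCard_univ] at hAB
          rw [hAB.1, hAB.2]
    _ = _ := by simp [card_powersetCard]

def bdrySign (s : Finset V) (x : V) : K := (-1) ^ (s.filter (· < x)).card

lemma bdrySign_mul_bdrySign_erase {s : Finset V} {x y : V} (hx : x ∈ s) (hy : y ∈ s)
    (hxy : x ≠ y) :
    bdrySign K s x * bdrySign K (s.erase x) y = -(bdrySign K s y * bdrySign K (s.erase y) x) := by
  wlog hlt : y < x generalizing x y
  · rw [this hy hx hxy.symm (lt_of_le_of_ne (not_lt.1 hlt) hxy), neg_neg]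
  have hbelow : (s.erase x).filter (· < y) = s.filter (· < y) := by
    rw [Finset.filter_erase]
    exact Finset.erase_eq_of_notMem (by simp [hlt.le])
  have hy' : y ∈ s.filter (· < x) := Finset.mem_filter.2 ⟨hy, hlt⟩
  have hcard : (s.filter (· < x)).card = ((s.erase y).filter (· < x)).card + 1 := by
    rw [Finset.filter_erase, Finset.card_erase_add_one hy']
  simp only [bdrySign, hbelow, hcard, pow_succ]
  ring

lemma bdrySign_of_forall_le {s : Finset V} {v : V} (h : ∀ y ∈ s, v ≤ y) : bdrySign K s v = 1 := by
  rw [bdrySign, Finset.filter_false_of_mem fun y hy => not_lt.2 (h y hy), Finset.card_empty,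
    pow_zero]

lemma bdrySign_insert_of_lt {s : Finset V} {v x : V} (hv : v ∉ s) (hvx : v < x) :
    bdrySign K (insert v s) x = -bdrySign K s x := by
  rw [bdrySign, bdrySign, Finset.filter_insert, if_pos hvx,
    Finset.card_insert_of_notMem fun h => hv (Finset.mem_filter.1 h).1, pow_succ, mul_neg_one]

namespace SC

section

variable {V : Type*} (Δ : SC V)

instance [Finite V] (k : ℕ) : Finite (Δ.face k) := Subtype.finite

lemma finrank_chain [Finite V] (k : ℕ) : finrank K (Δ.chain K k) = Nat.card (Δ.face k) := by
  have := Fintype.ofFinite (Δ.face k)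
  rw [finrank_finsupp_self, Nat.card_eq_fintype_card]

lemma card_face_eq_card {k : ℕ} {s : Finset (Finset V)}
    (hs : ∀ F, F ∈ Δ.faces ∧ F.card = k ↔ F ∈ s) : Nat.card (Δ.face k) = s.card := by
  rw [← Nat.card_eq_finsetCard]
  exact Nat.card_congr (Equiv.subtypeEquivRight hs)

open scoped Classical in
/-- The basis chain of `G`, or `0` when `G` is not a face of cardinality `k`. -/
noncomputable def gen (k : ℕ) (G : Finset V) : Δ.chain K k :=
  if h : G ∈ Δ.faces ∧ G.card = k then Finsupp.single ⟨G, h⟩ 1 else 0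

variable {Δ}

lemma gen_of_mem {k : ℕ} {G : Finset V} (h : G ∈ Δ.faces ∧ G.card = k) :
    Δ.gen K k G = Finsupp.single (α := Δ.face k) ⟨G, h⟩ 1 := by
  rw [gen, dif_pos h]

lemma gen_coe {k : ℕ} (F : Δ.face k) : Δ.gen K k F.1 = Finsupp.single F 1 :=
  gen_of_mem K F.2

lemma gen_of_not_mem {k : ℕ} {G : Finset V} (h : ¬(G ∈ Δ.faces ∧ G.card = k)) :
    Δ.gen K k G = 0 := by
  rw [gen, dif_neg h]

def simplex (S : Finset V) : SC V := ⟨{F | F ⊆ S}, fun _ _ hF hGF => hGF.trans hF⟩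

lemma card_face_simplex (S : Finset V) (k : ℕ) :
    Nat.card ((simplex S).face k) = S.card.choose k := by
  rw [← Finset.card_powersetCard k S]
  exact card_face_eq_card _ fun F => Finset.mem_powersetCard.symm

variable {Δ₁ Δ₂ : SC V} (h : Δ₁.faces ⊆ Δ₂.faces)

noncomputable def inclusion (k : ℕ) : Δ₁.chain K k →ₗ[K] Δ₂.chain K k :=
  Finsupp.lmapDomain K K fun F => ⟨F.1, h F.2.1, F.2.2⟩

lemma inclusion_single {k : ℕ} (F : Δ₁.face k) (c : K) :
    inclusion K h k (Finsupp.single F c) =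
      Finsupp.single (α := Δ₂.face k) ⟨F.1, h F.2.1, F.2.2⟩ c :=
  Finsupp.mapDomain_single

lemma inclusion_gen {k : ℕ} {G : Finset V} (hG : G ∈ Δ₁.faces ∧ G.card = k) :
    inclusion K h k (Δ₁.gen K k G) = Δ₂.gen K k G := by
  rw [gen_of_mem K hG, gen_of_mem K ⟨h hG.1, hG.2⟩]
  exact inclusion_single K h _ 1

lemma inclusion_injective (k : ℕ) : Function.Injective (inclusion K h k) :=
  Finsupp.mapDomain_injective fun _ _ hFG =>
    Subtype.ext (congrArg (fun G : Δ₂.face k => G.1) hFG)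

lemma single_mem_range_inclusion {k : ℕ} (G : Δ₂.face k) (hG : G.1 ∈ Δ₁.faces) (c : K) :
    Finsupp.single G c ∈ LinearMap.range (inclusion K h k) :=
  ⟨Finsupp.single ⟨G.1, hG, G.2.2⟩ c, inclusion_single K h _ c⟩

lemma range_inclusion_sup_range_inclusion {Δ : SC V} (h₁ : Δ₁.faces ⊆ Δ.faces)
    (h₂ : Δ₂.faces ⊆ Δ.faces) {k : ℕ}
    (hcover : ∀ F ∈ Δ.faces, F.card = k → F ∈ Δ₁.faces ∨ F ∈ Δ₂.faces) :
    LinearMap.range (inclusion K h₁ k) ⊔ LinearMap.range (inclusion K h₂ k) = ⊤ := by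
  refine Submodule.eq_top_iff'.2 fun c => ?_
  induction c using Finsupp.induction_linear with
  | zero => exact Submodule.zero_mem _
  | add _ _ hc hd => exact Submodule.add_mem _ hc hd
  | single G c =>
    rcases hcover G.1 G.2.1 G.2.2 with hG | hG
    · exact Submodule.mem_sup_left (single_mem_range_inclusion K h₁ G hG c)
    · exact Submodule.mem_sup_right (single_mem_range_inclusion K h₂ G hG c)

lemma range_inclusion_le_supported (k : ℕ) :
    LinearMap.range (inclusion K h k) ≤
      Finsupp.supported K K {G : Δ₂.face k | G.1 ∈ Δ₁.faces} := by
  classical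
  rintro _ ⟨c, rfl⟩ G hG
  obtain ⟨F, -, rfl⟩ := Finset.mem_image.1 (Finsupp.mapDomain_support hG)
  exact F.2.1

end

lemma erase_mem_face {Δ : SC V} {k : ℕ} (F : Δ.face (k + 1)) {x : V} (hx : x ∈ F.1) :
    F.1.erase x ∈ Δ.faces ∧ (F.1.erase x).card = k :=
  ⟨Δ.down F.2.1 (F.1.erase_subset x), by rw [Finset.card_erase_of_mem hx, F.2.2]; rfl⟩

variable (Δ : SC V)

lemma hdim_zero [Finite V] :
    Δ.hdim K 0 = Nat.card (Δ.face 0) - finrank K (LinearMap.range (Δ.bdry K 0)) := by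
  rw [hdim, bdryTo, LinearMap.ker_zero, finrank_top, finrank_chain]

lemma hdim_succ [Finite V] (k : ℕ) :
    Δ.hdim K (k + 1) = Nat.card (Δ.face (k + 1)) - finrank K (LinearMap.range (Δ.bdry K k)) -
      finrank K (LinearMap.range (Δ.bdry K (k + 1))) := by
  have := (Δ.bdry K k).finrank_range_add_finrank_ker
  rw [finrank_chain] at this
  rw [hdim, bdryTo]
  omega

lemma bdry_single (k : ℕ) (F : Δ.face (k + 1)) :
    Δ.bdry K k (Finsupp.single F 1) = ∑ x ∈ F.1, bdrySign K F.1 x • Δ.gen K k (F.1.erase x) := by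
  rw [bdry, Finsupp.lsum_single, LinearMap.toSpanSingleton_apply_one,
    ← Finset.sum_attach F.1]
  refine Finset.sum_congr rfl fun x _ => ?_
  rw [gen_of_mem K (erase_mem_face F x.2)]
  rfl

lemma bdry_gen (k : ℕ) {G : Finset V} (h : G ∈ Δ.faces ∧ G.card = k + 1) :
    Δ.bdry K k (Δ.gen K (k + 1) G) = ∑ x ∈ G, bdrySign K G x • Δ.gen K k (G.erase x) := by
  rw [gen_of_mem K h]
  exact Δ.bdry_single K k ⟨G, h⟩

lemma bdry_comp_bdry (k : ℕ) : Δ.bdry K k ∘ₗ Δ.bdry K (k + 1) = 0 := by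
  refine Finsupp.lhom_ext' fun F => LinearMap.ext_ring ?_
  simp only [LinearMap.comp_apply, Finsupp.lsingle_apply, LinearMap.zero_comp,
    LinearMap.zero_apply]
  rw [bdry_single, map_sum]
  calc ∑ x ∈ F.1, Δ.bdry K k (bdrySign K F.1 x • Δ.gen K (k + 1) (F.1.erase x))
      = ∑ p ∈ F.1.sigma F.1.erase, (bdrySign K F.1 p.1 * bdrySign K (F.1.erase p.1) p.2) •
          Δ.gen K k ((F.1.erase p.1).erase p.2) := by
        rw [Finset.sum_sigma]
        refine Finset.sum_congr rfl fun x hx => ?_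
        rw [map_smul, bdry_gen K Δ k (erase_mem_face F hx), Finset.smul_sum]
        simp only [smul_smul]
    _ = 0 := by
        refine Finset.sum_involution (fun p _ => ⟨p.2, p.1⟩) ?_ ?_ ?_ fun _ _ => rfl
        · rintro ⟨x, y⟩ hp
          obtain ⟨hx, hyx, hy⟩ : x ∈ F.1 ∧ y ≠ x ∧ y ∈ F.1 := by simpa using hp
          rw [Finset.erase_right_comm, bdrySign_mul_bdrySign_erase K hx hy hyx.symm, neg_smul,
            neg_add_cancel]
        · rintro ⟨x, y⟩ hp _ h
          exact (Finset.mem_erase.1 (Finset.mem_sigma.1 hp).2).1 (congrArg Sigma.fst h)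
        · rintro ⟨x, y⟩ hp
          simp only [Finset.mem_sigma, Finset.mem_erase] at hp ⊢
          exact ⟨hp.2.2, hp.2.1.symm, hp.1⟩

variable {Δ} {Δ₁ Δ₂ : SC V}

lemma bdry_comp_inclusion (h : Δ₁.faces ⊆ Δ₂.faces) (k : ℕ) :
    Δ₂.bdry K k ∘ₗ inclusion K h (k + 1) = inclusion K h k ∘ₗ Δ₁.bdry K k := by
  refine Finsupp.lhom_ext' fun F => LinearMap.ext_ring ?_
  simp only [LinearMap.comp_apply, Finsupp.lsingle_apply]
  rw [← gen_coe, inclusion_gen K h F.2, bdry_gen K _ k ⟨h F.2.1, F.2.2⟩, bdry_gen K _ k F.2,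
    map_sum]
  refine Finset.sum_congr rfl fun x hx => ?_
  rw [map_smul, inclusion_gen K h (erase_mem_face F hx)]

lemma finrank_range_bdry_comp_inclusion (h : Δ₁.faces ⊆ Δ₂.faces) (k : ℕ) :
    finrank K (LinearMap.range (Δ₂.bdry K k ∘ₗ inclusion K h (k + 1))) =
      finrank K (LinearMap.range (Δ₁.bdry K k)) := by
  rw [bdry_comp_inclusion, LinearMap.range_comp]
  exact (Submodule.equivMapOfInjective _ (inclusion_injective K h k) _).finrank_eq.symm

lemma finrank_range_bdry_eq_of_subset (h : Δ₁.faces ⊆ Δ₂.faces) {k : ℕ}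
    (hk : ∀ F ∈ Δ₂.faces, F.card = k + 1 → F ∈ Δ₁.faces) :
    finrank K (LinearMap.range (Δ₂.bdry K k)) = finrank K (LinearMap.range (Δ₁.bdry K k)) := by
  have htop : LinearMap.range (inclusion K h (k + 1)) = ⊤ := by
    simpa using range_inclusion_sup_range_inclusion K h h fun F hF hF' => Or.inl (hk F hF hF')
  rw [← finrank_range_bdry_comp_inclusion K h, LinearMap.range_comp_of_range_eq_top _ htop]

lemma finrank_range_bdry_eq_add [Finite V] (h₁ : Δ₁.faces ⊆ Δ.faces) (h₂ : Δ₂.faces ⊆ Δ.faces)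
    {k : ℕ}
    (hcover : ∀ F ∈ Δ.faces, F.card = k + 1 → F ∈ Δ₁.faces ∨ F ∈ Δ₂.faces)
    (hdisj : ∀ F ∈ Δ₁.faces, F ∈ Δ₂.faces → F.card ≠ k) :
    finrank K (LinearMap.range (Δ.bdry K k)) =
      finrank K (LinearMap.range (Δ₁.bdry K k)) + finrank K (LinearMap.range (Δ₂.bdry K k)) := by
  have hsupp (Δ' : SC V) (h' : Δ'.faces ⊆ Δ.faces) :
      LinearMap.range (Δ.bdry K k ∘ₗ inclusion K h' (k + 1)) ≤
        Finsupp.supported K K {G : Δ.face k | G.1 ∈ Δ'.faces} := by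
    rw [bdry_comp_inclusion, LinearMap.range_comp]
    exact LinearMap.map_le_range.trans (range_inclusion_le_supported K h' k)
  set P₁ := LinearMap.range (Δ.bdry K k ∘ₗ inclusion K h₁ (k + 1)) with hP₁
  set P₂ := LinearMap.range (Δ.bdry K k ∘ₗ inclusion K h₂ (k + 1)) with hP₂
  have hsup : P₁ ⊔ P₂ = LinearMap.range (Δ.bdry K k) := by
    rw [hP₁, hP₂, LinearMap.range_comp, LinearMap.range_comp, ← Submodule.map_sup,
      range_inclusion_sup_range_inclusion K h₁ h₂ hcover, Submodule.map_top]
  have hinf : P₁ ⊓ P₂ = ⊥ :=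
    ((Finsupp.disjoint_supported_supported (Set.disjoint_left.2 fun G hG₁ hG₂ =>
      hdisj G.1 hG₁ hG₂ G.2.2)).mono (hsupp Δ₁ h₁) (hsupp Δ₂ h₂)).eq_bot
  have := Submodule.finrank_sup_add_finrank_inf_eq P₁ P₂
  rwa [hsup, hinf, finrank_bot, add_zero, hP₁, hP₂, finrank_range_bdry_comp_inclusion,
    finrank_range_bdry_comp_inclusion] at this

variable (S : Finset V) (v : V)

/-- The contracting homotopy `F ↦ insert v F` of the simplex, which vanishes on the faces that
contain `v`. -/
noncomputable def coneMap (k : ℕ) : (simplex S).chain K k →ₗ[K] (simplex S).chain K (k + 1) :=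
  Finsupp.lsum K fun F => LinearMap.toSpanSingleton K _ ((simplex S).gen K (k + 1) (insert v F.1))

variable {S v}

lemma coneMap_gen {k : ℕ} {G : Finset V} (h : G ∈ (simplex S).faces ∧ G.card = k) :
    coneMap K S v k ((simplex S).gen K k G) = (simplex S).gen K (k + 1) (insert v G) := by
  rw [gen_of_mem K h]
  exact (Finsupp.lsum_single K _ _ _).trans (LinearMap.toSpanSingleton_apply_one K _ _)

lemma coneMap_bdry_single (k : ℕ) (F : (simplex S).face (k + 1)) :
    coneMap K S v k ((simplex S).bdry K k (Finsupp.single F 1)) =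
      ∑ x ∈ F.1, bdrySign K F.1 x • (simplex S).gen K (k + 1) (insert v (F.1.erase x)) := by
  rw [bdry_single, map_sum]
  exact Finset.sum_congr rfl fun x hx => by rw [map_smul, coneMap_gen K (erase_mem_face F hx)]

lemma bdry_coneMap_add_coneMap_bdry_single (hvS : v ∈ S) (hmin : ∀ y ∈ S, v ≤ y) (k : ℕ)
    (F : (simplex S).face (k + 1)) :
    (simplex S).bdry K (k + 1) (coneMap K S v (k + 1) (Finsupp.single F 1)) +
      coneMap K S v k ((simplex S).bdry K k (Finsupp.single F 1)) = Finsupp.single F 1 := by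
  have hFS : F.1 ⊆ S := F.2.1
  have hF : F.1 ∈ (simplex S).faces ∧ F.1.card = k + 1 := F.2
  rw [coneMap_bdry_single, ← gen_coe, coneMap_gen K hF]
  by_cases hv : v ∈ F.1
  · rw [Finset.insert_eq_self.2 hv, gen_of_not_mem K (by simp [hF.2]), map_zero, zero_add,
      Finset.sum_eq_single_of_mem v hv, bdrySign_of_forall_le K fun y hy => hmin y (hFS hy),
      Finset.insert_erase hv, one_smul]
    intro x hx hxv
    rw [Finset.insert_eq_self.2 (Finset.mem_erase.2 ⟨Ne.symm hxv, hv⟩),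
      gen_of_not_mem K (by simp [Finset.card_erase_of_mem hx, hF.2]), smul_zero]
  · have hins : insert v F.1 ∈ (simplex S).faces ∧ (insert v F.1).card = k + 1 + 1 :=
      ⟨Finset.insert_subset hvS hFS, by rw [Finset.card_insert_of_notMem hv, hF.2]⟩
    rw [bdry_gen K _ _ hins, Finset.sum_insert hv, Finset.erase_insert hv,
      bdrySign_of_forall_le K fun y hy => ?_, one_smul, add_assoc, ← Finset.sum_add_distrib,
      Finset.sum_eq_zero, add_zero]
    · intro x hx
      have hvx : v < x := lt_of_le_of_ne (hmin x (hFS hx)) fun h => hv (h ▸ hx)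
      rw [Finset.erase_insert_of_ne hvx.ne, bdrySign_insert_of_lt K hv hvx, neg_smul,
        neg_add_cancel]
    · exact hmin y ((Finset.insert_subset hvS hFS) hy)

lemma bdry_comp_coneMap_add_coneMap_comp_bdry (hvS : v ∈ S) (hmin : ∀ y ∈ S, v ≤ y) (k : ℕ) :
    (simplex S).bdry K (k + 1) ∘ₗ coneMap K S v (k + 1) +
      coneMap K S v k ∘ₗ (simplex S).bdry K k = LinearMap.id :=
  Finsupp.lhom_ext' fun F => LinearMap.ext_ring <|
    bdry_coneMap_add_coneMap_bdry_single K hvS hmin k F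

lemma bdry_comp_coneMap_zero (hvS : v ∈ S) :
    (simplex S).bdry K 0 ∘ₗ coneMap K S v 0 = LinearMap.id := by
  refine Finsupp.lhom_ext' fun F => LinearMap.ext_ring ?_
  have hF : F.1 = ∅ := Finset.card_eq_zero.1 F.2.2
  have hv : ({v} : Finset V) ∈ (simplex S).faces ∧ ({v} : Finset V).card = 0 + 1 :=
    ⟨Finset.singleton_subset_iff.2 hvS, rfl⟩
  simp only [LinearMap.comp_apply, Finsupp.lsingle_apply, LinearMap.id_apply]
  rw [← gen_coe, coneMap_gen K F.2, hF, insert_empty_eq, bdry_gen K _ _ hv,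
    Finset.sum_singleton, bdrySign_of_forall_le K (by simp), Finset.erase_singleton, one_smul]

lemma range_bdry_succ_simplex (hS : S.Nonempty) (k : ℕ) :
    LinearMap.range ((simplex S).bdry K (k + 1)) = LinearMap.ker ((simplex S).bdry K k) := by
  refine le_antisymm (LinearMap.range_le_ker_iff.2 (bdry_comp_bdry K _ k)) fun c hc => ?_
  have h := LinearMap.congr_fun (bdry_comp_coneMap_add_coneMap_comp_bdry K (S.min'_mem hS)
    (fun y hy => S.min'_le y hy) k) c
  rw [LinearMap.add_apply, LinearMap.comp_apply, LinearMap.comp_apply, LinearMap.mem_ker.1 hc,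
    map_zero, add_zero, LinearMap.id_apply] at h
  exact ⟨_, h⟩

lemma range_bdry_zero_simplex (hS : S.Nonempty) :
    LinearMap.range ((simplex S).bdry K 0) = ⊤ :=
  LinearMap.range_eq_top.2 fun c =>
    ⟨_, LinearMap.congr_fun (bdry_comp_coneMap_zero K (S.min'_mem hS)) c⟩

lemma finrank_range_bdry_simplex [Finite V] {k : ℕ} (h : S.Nonempty ∨ k ≠ 0) :
    finrank K (LinearMap.range ((simplex S).bdry K k)) = (S.card - 1).choose k := by
  rcases S.eq_empty_or_nonempty with rfl | hS
  · have hk := h.resolve_left Finset.not_nonempty_empty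
    have := ((simplex (∅ : Finset V)).bdry K k).finrank_range_le
    rw [finrank_chain, card_face_simplex, Finset.card_empty, Nat.choose_eq_zero_of_lt k.succ_pos,
      Nat.le_zero] at this
    rw [this, Finset.card_empty, Nat.choose_eq_zero_of_lt (Nat.pos_of_ne_zero hk)]
  induction k with
  | zero => rw [range_bdry_zero_simplex K hS, finrank_top, finrank_chain, card_face_simplex]; simp
  | succ k ih =>
    have := ((simplex S).bdry K k).finrank_range_add_finrank_ker
    rw [finrank_chain, card_face_simplex, ih (Or.inl hS),
      Nat.choose_succ_eq_sub_one_choose_add (Or.inl hS.card_pos.ne')] at this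
    rw [range_bdry_succ_simplex K hS]
    omega

end SC

section Bipartite

open SC

variable {n1 n2 r : ℕ} (W : Finset (Fin n1 ⊕ Fin n2))

lemma card_filter_isLeft : (W.filter (·.isLeft)).card = W.toLeft.card := by
  have : W.filter (·.isLeft) = W.toLeft.map Function.Embedding.inl := by
    ext (a | b) <;> simp
  rw [this, Finset.card_map]

lemma card_filter_isRight : (W.filter (·.isRight)).card = W.toRight.card := by
  have : W.filter (·.isRight) = W.toRight.map Function.Embedding.inr := by
    ext (a | b) <;> simp
  rw [this, Finset.card_map]

lemma disjoint_filter_isLeft_filter_isRight :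
    Disjoint (W.filter (·.isLeft)) (W.filter (·.isRight)) :=
  Finset.disjoint_filter_filter' _ _ fun p hL hR x hx => by
    have := hL x hx
    have := hR x hx
    cases x <;> simp_all

lemma mem_induce_bipSC_faces {F : Finset (Fin n1 ⊕ Fin n2)} :
    F ∈ ((bipSC n1 n2 r).induce W).faces ↔
      F ⊆ W ∧ (F.card ≤ r ∨ F ⊆ W.filter (·.isLeft) ∨ F ⊆ W.filter (·.isRight)) := by
  simp only [induce, bipSC, Set.mem_ofPred_eq, Finset.subset_iff, Finset.mem_filter]
  grind

lemma card_face_induce_bipSC (k : ℕ) :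
    Nat.card (((bipSC n1 n2 r).induce W).face k) =
      if k ≤ r then W.card.choose k
      else (W.filter (·.isLeft)).card.choose k + (W.filter (·.isRight)).card.choose k := by
  split_ifs with hk
  · rw [← Finset.card_powersetCard]
    refine card_face_eq_card _ fun F => ?_
    rw [mem_induce_bipSC_faces, Finset.mem_powersetCard]
    grind
  · have hdisj : Disjoint ((W.filter (·.isLeft)).powersetCard k)
        ((W.filter (·.isRight)).powersetCard k) := by
      refine Finset.disjoint_left.2 fun F hL hR => ?_
      rw [Finset.mem_powersetCard] at hL hR
      have hF := disjoint_self.1 ((disjoint_filter_isLeft_filter_isRight W).mono hL.1 hR.1)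
      simp [hF, ← hL.2] at hk
    rw [← Finset.card_powersetCard, ← Finset.card_powersetCard,
      ← Finset.card_union_of_disjoint hdisj]
    refine card_face_eq_card _ fun F => ?_
    rw [mem_induce_bipSC_faces, Finset.mem_union, Finset.mem_powersetCard,
      Finset.mem_powersetCard]
    grind

lemma finrank_range_bdry_induce_bipSC (hr : 1 ≤ r) (hW : W.Nonempty) (k : ℕ) :
    finrank K (LinearMap.range (((bipSC n1 n2 r).induce W).bdry K k)) =
      if k < r then (W.card - 1).choose k
      else ((W.filter (·.isLeft)).card - 1).choose k +
        ((W.filter (·.isRight)).card - 1).choose k := by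
  split_ifs with hk
  · rw [← finrank_range_bdry_eq_of_subset K (Δ₁ := (bipSC n1 n2 r).induce W) (Δ₂ := simplex W)
      (k := k) (fun F hF => hF.2)
      fun F hF hF' => (mem_induce_bipSC_faces W).2 ⟨hF, Or.inl (by omega)⟩,
      finrank_range_bdry_simplex K (Or.inl hW)]
  · set L := W.filter (·.isLeft)
    set R := W.filter (·.isRight)
    have hL : (simplex L).faces ⊆ ((bipSC n1 n2 r).induce W).faces := fun F hF =>
      (mem_induce_bipSC_faces W).2 ⟨hF.trans (W.filter_subset _), Or.inr (Or.inl hF)⟩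
    have hR : (simplex R).faces ⊆ ((bipSC n1 n2 r).induce W).faces := fun F hF =>
      (mem_induce_bipSC_faces W).2 ⟨hF.trans (W.filter_subset _), Or.inr (Or.inr hF)⟩
    have hcover : ∀ F ∈ ((bipSC n1 n2 r).induce W).faces, F.card = k + 1 →
        F ∈ (simplex L).faces ∨ F ∈ (simplex R).faces := fun F hF hF' =>
      ((mem_induce_bipSC_faces W).1 hF).2.resolve_left (by omega)
    have hdisj : ∀ F ∈ (simplex L).faces, F ∈ (simplex R).faces → F.card ≠ k :=
      fun F hFL hFR => by
        rw [disjoint_self.1 ((disjoint_filter_isLeft_filter_isRight W).mono hFL hFR),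
          Finset.bot_eq_empty, Finset.card_empty]
        omega
    rw [finrank_range_bdry_eq_add K hL hR hcover hdisj,
      finrank_range_bdry_simplex K (Or.inr (by omega)),
      finrank_range_bdry_simplex K (Or.inr (by omega))]

lemma hdim_induce_bipSC (hr : 1 ≤ r) (hW : W.Nonempty) (k : ℕ) :
    ((bipSC n1 n2 r).induce W).hdim K k =
      if k = r then
        (W.card - 1).choose r - ((W.toLeft.card - 1).choose r + (W.toRight.card - 1).choose r)
      else 0 := by
  rw [← card_filter_isLeft, ← card_filter_isRight]
  cases k with
  | zero =>
    rw [hdim_zero, card_face_induce_bipSC, finrank_range_bdry_induce_bipSC K W hr hW,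
      if_pos (Nat.zero_le r), if_pos (show 0 < r by omega), if_neg (by omega)]
    simp
  | succ k =>
    rw [hdim_succ, card_face_induce_bipSC, finrank_range_bdry_induce_bipSC K W hr hW,
      finrank_range_bdry_induce_bipSC K W hr hW]
    have hpascal := Nat.choose_succ_eq_sub_one_choose_add (k := k) (Or.inl hW.card_pos.ne')
    rcases lt_trichotomy (k + 1) r with hlt | rfl | hgt
    · rw [if_pos hlt.le, if_pos (by omega), if_pos hlt, if_neg hlt.ne]
      omega
    · rw [if_pos le_rfl, if_pos k.lt_succ_self, if_neg (lt_irrefl _), if_pos rfl]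
      omega
    · have hL := Nat.choose_succ_eq_sub_one_choose_add
        (n := (W.filter (·.isLeft)).card) (k := k) (Or.inr (by omega))
      have hR := Nat.choose_succ_eq_sub_one_choose_add
        (n := (W.filter (·.isRight)).card) (k := k) (Or.inr (by omega))
      rw [if_neg (by omega), if_neg (by omega), if_neg (by omega), if_neg hgt.ne']
      omega

end Bipartite

lemma betti_bipSC {n1 n2 r : ℕ} (hr : 1 ≤ r) {i d : ℕ} (hid : i + d ≠ 0) :
    (bipSC n1 n2 r).betti K i (i + d) =
      if d = r then
        ∑ W ∈ (univ : Finset (Fin n1 ⊕ Fin n2)).powersetCard (i + d),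
          ((i + d - 1).choose r - ((W.toLeft.card - 1).choose r + (W.toRight.card - 1).choose r))
      else 0 := by
  rw [SC.betti, Nat.add_sub_cancel_left, Finset.sum_congr rfl fun W hW => by
    have hcard : W.card = i + d := (mem_powersetCard.1 hW).2
    rw [hdim_induce_bipSC K W hr (card_pos.1 (by omega)), hcard]]
  by_cases hd : d = r <;> simp [hd]

theorem betti_bipartite_general (K : Type*) [Field K] (n1 n2 r : ℕ) (hr : 1 ≤ r) :
    (∀ i : ℕ,
      (bipSC n1 n2 r).betti K i (i + r) =
        (n1 + n2).choose (i + r) * (i + r - 1).choose r -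
          ∑ p ∈ Finset.HasAntidiagonal.antidiagonal (i + r),
            n1.choose p.1 * n2.choose p.2 *
              ((p.1 - 1).choose r + (p.2 - 1).choose r)) ∧
    (∀ i d : ℕ, d ≠ r → (i, d) ≠ (0, 0) →
      (bipSC n1 n2 r).betti K i (i + d) = 0) := by
  refine ⟨fun i => ?_, fun i d hd hid => ?_⟩
  · have hle : ∀ p ∈ antidiagonal (i + r),
        (p.1 - 1).choose r + (p.2 - 1).choose r ≤ (i + r - 1).choose r := fun p hp => by
      rw [← HasAntidiagonal.mem_antidiagonal.1 hp]
      exact Nat.choose_sub_one_add_choose_sub_one_le (by omega) p.1 p.2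
    rw [betti_bipSC K hr (by omega), if_pos rfl,
      sum_powersetCard_univ_sum_eq_sum_antidiagonal (i + r)
        fun a b => (i + r - 1).choose r - ((a - 1).choose r + (b - 1).choose r)]
    simp only [Fintype.card_fin, smul_eq_mul, Nat.mul_sub]
    rw [sum_tsub_distrib _ fun p hp => Nat.mul_le_mul_left _ (hle p hp), ← sum_mul,
      ← Nat.add_choose_eq]
  · rw [betti_bipSC K hr (by grind), if_neg hd]

/-- Graded Betti numbers of `R/I_r(K_{n1,n2})`:
`β_{i,i+r} = C(n1+n2, i+r)·C(i+r-1, r) − ∑_{j1+j2 = i+r} C(n1,j1) C(n2,j2)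
[C(j1-1, r) + C(j2-1, r)]`, and `β_{i,i+d} = 0` for `d ≠ r` with `(i,d) ≠ (0,0)`. -/
theorem betti_bipartite (K : Type*) [Field K] (n1 n2 r : ℕ) (h1 : 1 ≤ n1) (h2 : 1 ≤ n2)
    (hr : 1 ≤ r) :
    (∀ i : ℕ,
      (bipSC n1 n2 r).betti K i (i + r) =
        (n1 + n2).choose (i + r) * (i + r - 1).choose r -
          ∑ p ∈ Finset.HasAntidiagonal.antidiagonal (i + r),
            n1.choose p.1 * n2.choose p.2 *
              ((p.1 - 1).choose r + (p.2 - 1).choose r)) ∧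
    (∀ i d : ℕ, d ≠ r → (i, d) ≠ (0, 0) →
      (bipSC n1 n2 r).betti K i (i + d) = 0) :=
  betti_bipartite_general K n1 n2 r hr
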